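/- arXiv:math/0010090 — 3 statements merged into one kernel-verified Lean document; each statement's English description precedes it below -/
import Mathlib

section
/- Let (H^{(i)}_{(1)1}) be a temporal spray, (G^{(i)}_{(1)1}) a spatial spray on J^1(R,M), and h = (h_{11}(t)) a semi-Riemannian metric on R with inverse h^{11}. Then along any smooth curve c: t ↦ (x^i(t)) with y^i = dx^i/dt, the expression h^{11}{ d²x^i/dt² + 2G^{(i)}_{(1)1} + 2H^{(i)}_{(1)1} } transforms under the induced jet coordinate change as a d-vector, namely it equals (∂x^i/∂x̃^j) · [ h̃^{11}{ d²x̃^j/dt̃² + 2G̃^{(j)}_{(1)1} + 2H̃^{(j)}_{(1)1} } ]; consequently the harmonic-curve equations h^{11}{ d²x^i/dt² + 2G^{(i)}_{(1)1} + 2H^{(i)}_{(1)1} } = 0 are invariant under the full gauge group of J^1(R,M). -/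
noncomputable section

open scoped BigOperators

/-- Local spatial coordinates (fibre ℝⁿ). -/
abbrev Vec (n : ℕ) : Type := Fin n → ℝ

/-- Local coordinates `(t, xⁱ, yⁱ)` on the 1-jet bundle `J¹(ℝ, M)`. -/
abbrev J1 (n : ℕ) : Type := ℝ × Vec n × Vec n

namespace Jet

variable {n : ℕ}

/-- Partial derivative in the temporal variable `t`. -/
def pt (f : J1 n → ℝ) (p : J1 n) : ℝ := deriv (fun s => f (s, p.2)) p.1

/-- Partial derivative in the spatial variable `x^j`. -/
def px (f : J1 n → ℝ) (j : Fin n) (p : J1 n) : ℝ :=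
  deriv (fun s => f (p.1, Function.update p.2.1 j s, p.2.2)) (p.2.1 j)

/-- Partial derivative in the fibre variable `y^j`. -/
def py (f : J1 n → ℝ) (j : Fin n) (p : J1 n) : ℝ :=
  deriv (fun s => f (p.1, p.2.1, Function.update p.2.2 j s)) (p.2.2 j)

/-- Partial derivative of a function of the spatial variables only. -/
def pX (f : Vec n → ℝ) (j : Fin n) (x : Vec n) : ℝ :=
  deriv (fun s => f (Function.update x j s)) (x j)

/-- A change of coordinates `t̃ = t̃(t)`, `x̃ⁱ = x̃ⁱ(xʲ)` on the base `ℝ × M`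
(a gauge transformation of the bundle of configurations). -/
structure CoordChange (n : ℕ) where
  τ : ℝ → ℝ
  τinv : ℝ → ℝ
  σ : Vec n → Vec n
  σinv : Vec n → Vec n
  left_τ : Function.LeftInverse τinv τ
  right_τ : Function.RightInverse τinv τ
  left_σ : Function.LeftInverse σinv σ
  right_σ : Function.RightInverse σinv σ
  smooth_τ : ContDiff ℝ (⊤ : ℕ∞) τ
  smooth_τinv : ContDiff ℝ (⊤ : ℕ∞) τinv
  smooth_σ : ContDiff ℝ (⊤ : ℕ∞) σ
  smooth_σinv : ContDiff ℝ (⊤ : ℕ∞) σinv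

namespace CoordChange

variable (c : CoordChange n)

/-- `dt̃/dt`. -/
def dτ (t : ℝ) : ℝ := deriv c.τ t

/-- `dt/dt̃`, evaluated at `t̃ = τ t`. -/
def dτinv (t : ℝ) : ℝ := deriv c.τinv (c.τ t)

/-- The Jacobian `∂x̃^k/∂x^j`. -/
def Jac (k j : Fin n) (x : Vec n) : ℝ := pX (fun z => c.σ z k) j x

/-- The inverse Jacobian `∂x^i/∂x̃^j`, evaluated at `x̃ = σ x`. -/
def JacInv (i j : Fin n) (x : Vec n) : ℝ := pX (fun z => c.σinv z i) j (c.σ x)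

/-- The induced change of the fibre coordinates:
`ỹⁱ = (∂x̃ⁱ/∂xʲ)(dt/dt̃) yʲ`. -/
def yc (p : J1 n) : Vec n := fun i => (∑ j, c.Jac i j p.2.1 * p.2.2 j) * c.dτinv p.1

/-- The induced change of coordinates on `J¹(ℝ,M)`. -/
def Φ (p : J1 n) : J1 n := (c.τ p.1, c.σ p.2.1, c.yc p)

end CoordChange

/-- The transformation law of the local components of a temporal spray:
`2H̃⁽ᵏ⁾ = 2H⁽ʲ⁾ (dt/dt̃)² (∂x̃ᵏ/∂xʲ) − (dt/dt̃)(∂ỹᵏ/∂t)`. -/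
def TemporalSprayLaw (c : CoordChange n) (H H' : J1 n → Fin n → ℝ) : Prop :=
  ∀ (p : J1 n) (k : Fin n),
    2 * H' (c.Φ p) k =
      (∑ j, 2 * H p j * (c.dτinv p.1) ^ 2 * c.Jac k j p.2.1) -
        c.dτinv p.1 * pt (fun q => c.yc q k) p

/-- The transformation law of the local components of a spatial spray:
`2G̃⁽ᵏ⁾ = 2G⁽ʲ⁾ (dt/dt̃)² (∂x̃ᵏ/∂xʲ) − (∂xⁱ/∂x̃ʲ)(∂ỹᵏ/∂xⁱ) ỹʲ`. -/
def SpatialSprayLaw (c : CoordChange n) (G G' : J1 n → Fin n → ℝ) : Prop :=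
  ∀ (p : J1 n) (k : Fin n),
    2 * G' (c.Φ p) k =
      (∑ j, 2 * G p j * (c.dτinv p.1) ^ 2 * c.Jac k j p.2.1) -
        ∑ j, ∑ i, c.JacInv i j p.2.1 * px (fun q => c.yc q k) i p * c.yc p j

/-- The transformation law of a temporal nonlinear connection:
`M̃⁽ʲ⁾(dt̃/dt) = M⁽ᵏ⁾(dt/dt̃)(∂x̃ʲ/∂xᵏ) − ∂ỹʲ/∂t`. -/
def TemporalNLCLaw (c : CoordChange n) (M M' : J1 n → Fin n → ℝ) : Prop :=
  ∀ (p : J1 n) (j : Fin n),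
    M' (c.Φ p) j * c.dτ p.1 =
      (∑ k, M p k * c.dτinv p.1 * c.Jac j k p.2.1) - pt (fun q => c.yc q j) p

/-- The transformation law of a spatial nonlinear connection:
`Ñ⁽ʲ⁾₍ₖ₎(∂x̃ᵏ/∂xⁱ) = N⁽ᵏ⁾₍ᵢ₎(dt/dt̃)(∂x̃ʲ/∂xᵏ) − ∂ỹʲ/∂xⁱ`. -/
def SpatialNLCLaw (c : CoordChange n) (N N' : J1 n → Fin n → Fin n → ℝ) : Prop :=
  ∀ (p : J1 n) (j i : Fin n),
    (∑ k, N' (c.Φ p) j k * c.Jac k i p.2.1) =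
      (∑ k, N p k i * c.dτinv p.1 * c.Jac j k p.2.1) - px (fun q => c.yc q j) i p

/-- Transformation law of a (semi-Riemannian) temporal metric `h₁₁(t)`. -/
def TemporalMetricLaw (c : CoordChange n) (h h' : ℝ → ℝ) : Prop :=
  ∀ t : ℝ, h' (c.τ t) = h t * (c.dτinv t) ^ 2

/-- Transformation law of a (semi-Riemannian) spatial metric `φᵢⱼ(x)`. -/
def SpatialMetricLaw (c : CoordChange n) (φ φ' : Vec n → Matrix (Fin n) (Fin n) ℝ) : Prop :=
  ∀ (x : Vec n) (i j : Fin n),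
    φ' (c.σ x) i j = ∑ k, ∑ l, φ x k l * c.JacInv k i x * c.JacInv l j x

/-- The Christoffel symbol `H¹₁₁ = (h¹¹/2) dh₁₁/dt` of a temporal metric. -/
def christoffelT (h : ℝ → ℝ) (t : ℝ) : ℝ := deriv h t / (2 * h t)

/-- The Christoffel symbols `γⁱⱼₖ` of a spatial metric `φ`. -/
def christoffelS (φ : Vec n → Matrix (Fin n) (Fin n) ℝ) (i j k : Fin n) (x : Vec n) : ℝ :=
  (1 / 2) * ∑ m, (φ x)⁻¹ i m *
    (pX (fun z => φ z m j) k x + pX (fun z => φ z m k) j x - pX (fun z => φ z j k) m x)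

/-- Velocity `yⁱ = dxⁱ/dt` of a curve. -/
def vel {n : ℕ} (x : ℝ → Vec n) (t : ℝ) : Vec n := fun i => deriv (fun s => x s i) t

/-- Acceleration `d²xⁱ/dt²` of a curve. -/
def acc {n : ℕ} (x : ℝ → Vec n) (t : ℝ) : Vec n :=
  fun i => deriv (deriv (fun s => x s i)) t


section Helpers

variable {n : ℕ}

lemma pX_eq_fderiv {f : Vec n → ℝ} (hf : Differentiable ℝ f) (i : Fin n) (z : Vec n) :
    pX f i z = fderiv ℝ f z (Pi.single i 1) := by
  have h0 : HasFDerivAt f (fderiv ℝ f z) (Function.update z i (z i)) := by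
    rw [Function.update_eq_self]; exact (hf z).hasFDerivAt
  exact (h0.comp_hasDerivAt (z i) (hasDerivAt_update z i (z i))).deriv

lemma contDiff_pX {f : Vec n → ℝ} (hf : ContDiff ℝ (⊤ : ℕ∞) f) (i : Fin n) :
    ContDiff ℝ (⊤ : ℕ∞) (pX f i) := by
  have e : pX f i = fun z => fderiv ℝ f z (Pi.single i 1) :=
    funext fun z => pX_eq_fderiv (hf.differentiable (by simp)) i z
  rw [e]
  exact (hf.fderiv_right (by simp)).clm_apply contDiff_const

lemma hasDerivAt_comp_pi {f : Vec n → ℝ} (hf : ContDiff ℝ (⊤ : ℕ∞) f)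
    {x : ℝ → Vec n} {v : Vec n} {t : ℝ} (hx : HasDerivAt x v t) :
    HasDerivAt (fun s => f (x s)) (∑ i, pX f i (x t) * v i) t := by
  have h1 := (hf.differentiable (by simp) (x t)).hasFDerivAt.comp_hasDerivAt t hx
  have hv : v = ∑ i, v i • (Pi.single i 1 : Vec n) := by
    funext k
    simp [Finset.sum_apply, Pi.single_apply]
  refine h1.congr_deriv (Eq.symm ?_)
  conv_rhs => rw [hv]
  rw [map_sum]
  refine Finset.sum_congr rfl fun i _ => ?_
  rw [pX_eq_fderiv (hf.differentiable (by simp)) i (x t), map_smul]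
  simp [mul_comm]

lemma pt_eq_fderiv {f : J1 n → ℝ} (hf : Differentiable ℝ f) (p : J1 n) :
    pt f p = fderiv ℝ f p ((1:ℝ), (0 : Vec n), (0 : Vec n)) := by
  have hc : HasDerivAt (fun s : ℝ => (s, p.2)) ((1:ℝ), (0 : Vec n), (0 : Vec n)) p.1 :=
    HasDerivAt.prodMk (hasDerivAt_id p.1) (hasDerivAt_const p.1 p.2)
  exact ((hf p).hasFDerivAt.comp_hasDerivAt p.1 hc).deriv

lemma px_eq_fderiv {f : J1 n → ℝ} (hf : Differentiable ℝ f) (i : Fin n) (p : J1 n) :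
    px f i p = fderiv ℝ f p ((0:ℝ), (Pi.single i 1 : Vec n), (0 : Vec n)) := by
  have hc : HasDerivAt (fun s : ℝ => (p.1, Function.update p.2.1 i s, p.2.2))
      ((0:ℝ), (Pi.single i 1 : Vec n), (0 : Vec n)) (p.2.1 i) :=
    HasDerivAt.prodMk (hasDerivAt_const _ p.1)
      (HasDerivAt.prodMk (hasDerivAt_update p.2.1 i (p.2.1 i)) (hasDerivAt_const _ p.2.2))
  have h0 : HasFDerivAt f (fderiv ℝ f p) (p.1, Function.update p.2.1 i (p.2.1 i), p.2.2) := by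
    rw [Function.update_eq_self]; exact (hf p).hasFDerivAt
  exact (h0.comp_hasDerivAt (p.2.1 i) hc).deriv

lemma py_eq_fderiv {f : J1 n → ℝ} (hf : Differentiable ℝ f) (i : Fin n) (p : J1 n) :
    py f i p = fderiv ℝ f p ((0:ℝ), (0 : Vec n), (Pi.single i 1 : Vec n)) := by
  have hc : HasDerivAt (fun s : ℝ => (p.1, p.2.1, Function.update p.2.2 i s))
      ((0:ℝ), (0 : Vec n), (Pi.single i 1 : Vec n)) (p.2.2 i) :=
    HasDerivAt.prodMk (hasDerivAt_const _ p.1)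
      (HasDerivAt.prodMk (hasDerivAt_const _ p.2.1) (hasDerivAt_update p.2.2 i (p.2.2 i)))
  have h0 : HasFDerivAt f (fderiv ℝ f p) (p.1, p.2.1, Function.update p.2.2 i (p.2.2 i)) := by
    rw [Function.update_eq_self]; exact (hf p).hasFDerivAt
  exact (h0.comp_hasDerivAt (p.2.2 i) hc).deriv

lemma hasDerivAt_comp_J1 {f : J1 n → ℝ} (hf : ContDiff ℝ (⊤ : ℕ∞) f)
    {x w : ℝ → Vec n} {v a : Vec n} {t : ℝ}
    (hx : HasDerivAt x v t) (hw : HasDerivAt w a t) :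
    HasDerivAt (fun u => f (u, x u, w u))
      (pt f (t, x t, w t) + ∑ i, px f i (t, x t, w t) * v i
        + ∑ i, py f i (t, x t, w t) * a i) t := by
  have hdf := hf.differentiable (by simp)
  set p : J1 n := (t, x t, w t) with hp
  have hc : HasDerivAt (fun u : ℝ => (u, x u, w u)) ((1:ℝ), v, a) t :=
    HasDerivAt.prodMk (hasDerivAt_id t) (hx.prodMk hw)
  have h1 := (hdf p).hasFDerivAt.comp_hasDerivAt t hc
  refine h1.congr_deriv (Eq.symm ?_)
  set L := fderiv ℝ f p
  have hdec : ((1:ℝ), v, a) = ((1:ℝ), (0:Vec n), (0:Vec n))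
      + (∑ i, v i • ((0:ℝ), (Pi.single i 1 : Vec n), (0:Vec n)))
      + (∑ i, a i • ((0:ℝ), (0:Vec n), (Pi.single i 1 : Vec n))) := by
    have hfst : ∀ (f : Fin n → ℝ × Vec n × Vec n), (∑ i, f i).1 = ∑ i, (f i).1 :=
      fun f => map_sum (AddMonoidHom.fst ℝ (Vec n × Vec n)) f Finset.univ
    have hsnd : ∀ (f : Fin n → ℝ × Vec n × Vec n), (∑ i, f i).2 = ∑ i, (f i).2 :=
      fun f => map_sum (AddMonoidHom.snd ℝ (Vec n × Vec n)) f Finset.univ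
    have hfst2 : ∀ (f : Fin n → Vec n × Vec n), (∑ i, f i).1 = ∑ i, (f i).1 :=
      fun f => map_sum (AddMonoidHom.fst (Vec n) (Vec n)) f Finset.univ
    have hsnd2 : ∀ (f : Fin n → Vec n × Vec n), (∑ i, f i).2 = ∑ i, (f i).2 :=
      fun f => map_sum (AddMonoidHom.snd (Vec n) (Vec n)) f Finset.univ
    refine Prod.ext ?_ (Prod.ext ?_ ?_)
    · simp [hfst]
    · funext k
      simp only [Prod.snd_add, Prod.fst_add, hsnd, hfst2, Finset.sum_apply]
      simp [Pi.single_apply]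
    · funext k
      simp only [Prod.snd_add, hsnd, hsnd2, Finset.sum_apply]
      simp [Pi.single_apply]
  rw [hdec, map_add, map_add, map_sum, map_sum, pt_eq_fderiv hdf]
  congr 1
  · congr 1
    exact Finset.sum_congr rfl fun i _ => by
      rw [px_eq_fderiv hdf i p, map_smul]; simp [mul_comm, L]
  · exact Finset.sum_congr rfl fun i _ => by
      rw [py_eq_fderiv hdf i p, map_smul]; simp [mul_comm, L]

variable (c : CoordChange n)

lemma contDiff_sigma_comp (k : Fin n) : ContDiff ℝ (⊤ : ℕ∞) (fun z => c.σ z k) :=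
  contDiff_pi.mp c.smooth_σ k

lemma contDiff_sigmainv_comp (k : Fin n) : ContDiff ℝ (⊤ : ℕ∞) (fun z => c.σinv z k) :=
  contDiff_pi.mp c.smooth_σinv k

lemma contDiff_Jac (k j : Fin n) : ContDiff ℝ (⊤ : ℕ∞) (c.Jac k j) :=
  contDiff_pX (contDiff_sigma_comp c k) j

lemma contDiff_deriv_top {f : ℝ → ℝ} (hf : ContDiff ℝ (⊤ : ℕ∞) f) : ContDiff ℝ (⊤ : ℕ∞) (deriv f) := by
  have h1 : ContDiff ℝ (⊤ : ℕ∞) fun t => fderiv ℝ f t 1 :=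
    (hf.fderiv_right (by simp)).clm_apply contDiff_const
  have e : deriv f = fun t => fderiv ℝ f t 1 := funext fun t => (fderiv_apply_one_eq_deriv).symm
  rw [e]; exact h1

lemma contDiff_dτinv : ContDiff ℝ (⊤ : ℕ∞) c.dτinv :=
  (contDiff_deriv_top c.smooth_τinv).comp c.smooth_τ

lemma contDiff_yc (k : Fin n) : ContDiff ℝ (⊤ : ℕ∞) (fun p : J1 n => c.yc p k) := by
  unfold CoordChange.yc
  refine ContDiff.mul ?_ ((contDiff_dτinv c).comp contDiff_fst)
  refine ContDiff.sum fun j _ => ContDiff.mul ?_ ?_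
  · exact (contDiff_Jac c k j).comp (contDiff_fst.comp contDiff_snd)
  · exact contDiff_pi.mp (contDiff_snd.comp contDiff_snd) j

lemma py_yc (p : J1 n) (k i : Fin n) :
    py (fun q => c.yc q k) i p = c.Jac k i p.2.1 * c.dτinv p.1 := by
  unfold py CoordChange.yc
  simp only
  have h1 : ∀ j : Fin n, HasDerivAt (fun s => c.Jac k j p.2.1 * Function.update p.2.2 i s j)
      (c.Jac k j p.2.1 * (Pi.single i (1:ℝ) : Vec n) j) (p.2.2 i) := fun j =>
    ((hasDerivAt_pi.mp (hasDerivAt_update p.2.2 i (p.2.2 i))) j).const_mul _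
  have h2 : HasDerivAt (fun s => (∑ j, c.Jac k j p.2.1 * Function.update p.2.2 i s j)
        * c.dτinv p.1)
      ((∑ j, c.Jac k j p.2.1 * (Pi.single i (1:ℝ) : Vec n) j) * c.dτinv p.1) (p.2.2 i) :=
    (HasDerivAt.fun_sum (fun j _ => h1 j)).mul_const _
  rw [h2.deriv]
  congr 1
  simp [Pi.single_apply]

lemma dτ_mul_dτinv (t : ℝ) : c.dτ t * c.dτinv t = 1 := by
  have hτ : HasDerivAt c.τ (c.dτ t) t :=
    ((c.smooth_τ.differentiable (by simp)) t).hasDerivAt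
  have hτi : HasDerivAt c.τinv (c.dτinv t) (c.τ t) :=
    ((c.smooth_τinv.differentiable (by simp)) (c.τ t)).hasDerivAt
  have hτ' : HasDerivAt c.τ (c.dτ t) (c.τinv (c.τ t)) := by
    rw [c.left_τ t]; exact hτ
  have hcomp : HasDerivAt (fun s => c.τ (c.τinv s)) (c.dτ t * c.dτinv t) (c.τ t) :=
    HasDerivAt.comp _ hτ' hτi
  have hid : HasDerivAt (fun s : ℝ => c.τ (c.τinv s)) 1 (c.τ t) := by
    have : (fun s : ℝ => c.τ (c.τinv s)) = id := funext fun s => c.right_τ s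
    rw [this]; exact hasDerivAt_id _
  exact hcomp.unique hid

lemma dτinv_ne_zero (t : ℝ) : c.dτinv t ≠ 0 :=
  fun h0 => by simpa [h0] using dτ_mul_dτinv c t

lemma JacInv_mul_Jac (z : Vec n) (i m : Fin n) :
    ∑ j, c.JacInv i j z * c.Jac j m z = if i = m then 1 else 0 := by
  have hup : HasDerivAt (fun s => Function.update z m s) (Pi.single m (1:ℝ) : Vec n) (z m) :=
    hasDerivAt_update z m (z m)
  have hcurve : HasDerivAt (fun s => c.σ (Function.update z m s))
      (fun j => c.Jac j m z) (z m) := by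
    rw [hasDerivAt_pi]
    intro j
    have := hasDerivAt_comp_pi (contDiff_sigma_comp c j) hup
    rw [Function.update_eq_self] at this
    refine this.congr_deriv (Eq.symm ?_)
    simp [CoordChange.Jac, Pi.single_apply, mul_comm]
  have houter := hasDerivAt_comp_pi (contDiff_sigmainv_comp c i) hcurve
  have heq : (fun s => c.σinv (c.σ (Function.update z m s)) i)
      = fun s => Function.update z m s i := by
    funext s; rw [c.left_σ]
  rw [heq] at houter
  have hother : HasDerivAt (fun s => Function.update z m s i)
      ((Pi.single m (1:ℝ) : Vec n) i) (z m) :=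
    (hasDerivAt_pi.mp hup) i
  have h2 := houter.unique hother
  rw [Function.update_eq_self] at h2
  simpa [CoordChange.JacInv, Pi.single_apply] using h2

lemma Jac_mul_JacInv (z : Vec n) (i m : Fin n) :
    ∑ j, c.Jac i j z * c.JacInv j m z = if i = m then 1 else 0 := by
  set w := c.σ z with hw
  have hup : HasDerivAt (fun s => Function.update w m s) (Pi.single m (1:ℝ) : Vec n) (w m) :=
    hasDerivAt_update w m (w m)
  have hcurve : HasDerivAt (fun s => c.σinv (Function.update w m s))
      (fun j => c.JacInv j m z) (w m) := by
    rw [hasDerivAt_pi]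
    intro j
    have := hasDerivAt_comp_pi (contDiff_sigmainv_comp c j) hup
    rw [Function.update_eq_self] at this
    refine this.congr_deriv (Eq.symm ?_)
    simp [CoordChange.JacInv, hw, Pi.single_apply, mul_comm]
  have houter := hasDerivAt_comp_pi (contDiff_sigma_comp c i) hcurve
  have heq : (fun s => c.σ (c.σinv (Function.update w m s)) i)
      = fun s => Function.update w m s i := by
    funext s; rw [c.right_σ]
  rw [heq] at houter
  have hother : HasDerivAt (fun s => Function.update w m s i)
      ((Pi.single m (1:ℝ) : Vec n) i) (w m) :=
    (hasDerivAt_pi.mp hup) i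
  have h2 := houter.unique hother
  rw [Function.update_eq_self] at h2
  rw [hw, c.left_σ z] at h2
  simpa [CoordChange.Jac, Pi.single_apply] using h2

end Helpers

/-- If `H`, `G` are a temporal and a spatial spray on `J¹(ℝ,M)` and `h` is a
semi-Riemannian metric on `ℝ`, then along any smooth curve `t ↦ x(t)` (with `yⁱ = dxⁱ/dt`) the
expression `h¹¹{d²xⁱ/dt² + 2G⁽ⁱ⁾₍₁₎₁ + 2H⁽ⁱ⁾₍₁₎₁}` transforms as a d-vector under the induced
jet coordinate change, i.e. it equals
`(∂xⁱ/∂x̃ʲ)[h̃¹¹{d²x̃ʲ/dt̃² + 2G̃⁽ʲ⁾₍₁₎₁ + 2H̃⁽ʲ⁾₍₁₎₁}]`; consequently the harmonic-curve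
equations `h¹¹{d²xⁱ/dt² + 2G⁽ⁱ⁾₍₁₎₁ + 2H⁽ⁱ⁾₍₁₎₁} = 0` are invariant under the full gauge
group of `J¹(ℝ,M)`. -/
theorem harmonic_curve_equations_transform_as_d_vector
    {n : ℕ} (c : CoordChange n) (H H' G G' : J1 n → Fin n → ℝ)
    (h h' : ℝ → ℝ)
    (lawH : TemporalSprayLaw c H H') (lawG : SpatialSprayLaw c G G')
    (lawh : TemporalMetricLaw c h h')
    (hH : ContDiff ℝ (⊤ : ℕ∞) H) (hH' : ContDiff ℝ (⊤ : ℕ∞) H')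
    (hG : ContDiff ℝ (⊤ : ℕ∞) G) (hG' : ContDiff ℝ (⊤ : ℕ∞) G')
    (hsm : ContDiff ℝ (⊤ : ℕ∞) h) (hne : ∀ t, h t ≠ 0) (hne' : ∀ t, h' t ≠ 0)
    (x : ℝ → Vec n) (hx : ContDiff ℝ (⊤ : ℕ∞) x) :
    (∀ (t : ℝ) (i : Fin n),
      (1 / h t) *
          (acc x t i + 2 * G (t, x t, vel x t) i + 2 * H (t, x t, vel x t) i) =
        ∑ j, c.JacInv i j (x t) *
          ((1 / h' (c.τ t)) *
            (acc (fun s => c.σ (x (c.τinv s))) (c.τ t) j +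
              2 * G' (c.Φ (t, x t, vel x t)) j + 2 * H' (c.Φ (t, x t, vel x t)) j))) ∧
    (∀ t : ℝ,
      (∀ i : Fin n,
        (1 / h t) *
          (acc x t i + 2 * G (t, x t, vel x t) i + 2 * H (t, x t, vel x t) i) = 0) ↔
      (∀ j : Fin n,
        (1 / h' (c.τ t)) *
          (acc (fun s => c.σ (x (c.τinv s))) (c.τ t) j +
            2 * G' (c.Φ (t, x t, vel x t)) j + 2 * H' (c.Φ (t, x t, vel x t)) j) = 0)) := by
  -- smoothness facts about the curve
  have hxc : ∀ i : Fin n, ContDiff ℝ (⊤ : ℕ∞) (fun s => x s i) := fun i => contDiff_pi.mp hx i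
  have hxD : ∀ t : ℝ, HasDerivAt x (vel x t) t := fun t =>
    hasDerivAt_pi.mpr fun i => (((hxc i).differentiable (by simp)) t).hasDerivAt
  have hvD : ∀ t : ℝ, HasDerivAt (vel x) (acc x t) t := fun t =>
    hasDerivAt_pi.mpr fun i =>
      (((contDiff_deriv_top (hxc i)).differentiable (by simp)) t).hasDerivAt
  -- derivative of the transported fibre coordinate along the curve
  have hF : ∀ (t : ℝ) (k : Fin n),
      HasDerivAt (fun u => c.yc (u, x u, vel x u) k)
        (pt (fun q => c.yc q k) (t, x t, vel x t)
          + ∑ i, px (fun q => c.yc q k) i (t, x t, vel x t) * vel x t i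
          + ∑ i, py (fun q => c.yc q k) i (t, x t, vel x t) * acc x t i) t :=
    fun t k => hasDerivAt_comp_J1 (contDiff_yc c k) (hxD t) (hvD t)
  -- velocity of the transformed curve
  have hvel_tilde : ∀ (s : ℝ) (j : Fin n),
      deriv (fun u => c.σ (x (c.τinv u)) j) s
        = c.yc (c.τinv s, x (c.τinv s), vel x (c.τinv s)) j := by
    intro s j
    have hτi : HasDerivAt c.τinv (deriv c.τinv s) s :=
      ((c.smooth_τinv.differentiable (by simp)) s).hasDerivAt
    have hxi : HasDerivAt (fun u => x (c.τinv u))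
        (deriv c.τinv s • vel x (c.τinv s)) s :=
      HasDerivAt.scomp s (hxD (c.τinv s)) hτi
    have hd := (hasDerivAt_comp_pi (contDiff_sigma_comp c j) hxi).deriv
    rw [hd]
    show _ = (∑ l, c.Jac j l (x (c.τinv s)) * vel x (c.τinv s) l) * c.dτinv (c.τinv s)
    rw [show c.dτinv (c.τinv s) = deriv c.τinv s by
      unfold CoordChange.dτinv; rw [c.right_τ s]]
    rw [Finset.sum_mul]
    exact Finset.sum_congr rfl fun l _ => by
      simp only [CoordChange.Jac, Pi.smul_apply, smul_eq_mul]; ring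
  -- acceleration of the transformed curve
  have haccEq : ∀ (t : ℝ) (j : Fin n),
      acc (fun s => c.σ (x (c.τinv s))) (c.τ t) j =
        (pt (fun q => c.yc q j) (t, x t, vel x t)
          + ∑ i, px (fun q => c.yc q j) i (t, x t, vel x t) * vel x t i
          + ∑ i, py (fun q => c.yc q j) i (t, x t, vel x t) * acc x t i) * c.dτinv t := by
    intro t j
    have hD1 : deriv (fun s => c.σ (x (c.τinv s)) j)
        = fun s => c.yc (c.τinv s, x (c.τinv s), vel x (c.τinv s)) j :=
      funext fun s => hvel_tilde s j
    show deriv (deriv (fun s => c.σ (x (c.τinv s)) j)) (c.τ t) = _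
    rw [hD1]
    have hτi : HasDerivAt c.τinv (c.dτinv t) (c.τ t) :=
      ((c.smooth_τinv.differentiable (by simp)) (c.τ t)).hasDerivAt
    have hFj : HasDerivAt (fun u => c.yc (u, x u, vel x u) j)
        (pt (fun q => c.yc q j) (t, x t, vel x t)
          + ∑ i, px (fun q => c.yc q j) i (t, x t, vel x t) * vel x t i
          + ∑ i, py (fun q => c.yc q j) i (t, x t, vel x t) * acc x t i)
        (c.τinv (c.τ t)) := by
      rw [c.left_τ t]; exact hF t j
    exact (HasDerivAt.comp (c.τ t) hFj hτi).deriv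
  -- the key identity
  have key : ∀ (t : ℝ) (j : Fin n),
      (1 / h' (c.τ t)) *
          (acc (fun s => c.σ (x (c.τinv s))) (c.τ t) j +
            2 * G' (c.Φ (t, x t, vel x t)) j + 2 * H' (c.Φ (t, x t, vel x t)) j)
        = ∑ k, c.Jac j k (x t) * ((1 / h t) *
            (acc x t k + 2 * G (t, x t, vel x t) k + 2 * H (t, x t, vel x t) k)) := by
    intro t j
    have hg : c.dτinv t ≠ 0 := dτinv_ne_zero c t
    have hht := hne t
    -- collapse of the JacInv–px–yc double sum
    have hcol : ∑ j', ∑ i, c.JacInv i j' (x t)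
          * px (fun q => c.yc q j) i (t, x t, vel x t) * c.yc (t, x t, vel x t) j'
        = c.dτinv t * ∑ i, px (fun q => c.yc q j) i (t, x t, vel x t) * vel x t i := by
      rw [Finset.sum_comm, Finset.mul_sum]
      refine Finset.sum_congr rfl fun i _ => ?_
      have e1 : ∑ j', c.JacInv i j' (x t)
            * px (fun q => c.yc q j) i (t, x t, vel x t) * c.yc (t, x t, vel x t) j'
          = px (fun q => c.yc q j) i (t, x t, vel x t)
            * ∑ j', c.JacInv i j' (x t) * c.yc (t, x t, vel x t) j' := by
        rw [Finset.mul_sum]; exact Finset.sum_congr rfl fun j' _ => by ring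
      rw [e1]
      have e2 : ∑ j', c.JacInv i j' (x t) * c.yc (t, x t, vel x t) j'
          = c.dτinv t * vel x t i := by
        have hyc : ∀ j' : Fin n, c.yc (t, x t, vel x t) j'
            = (∑ l, c.Jac j' l (x t) * vel x t l) * c.dτinv t := fun j' => rfl
        calc ∑ j', c.JacInv i j' (x t) * c.yc (t, x t, vel x t) j'
            = ∑ j', ∑ l, c.JacInv i j' (x t) * c.Jac j' l (x t)
                * (vel x t l * c.dτinv t) := by
              refine Finset.sum_congr rfl fun j' _ => ?_
              rw [hyc j', Finset.sum_mul, Finset.mul_sum]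
              exact Finset.sum_congr rfl fun l _ => by ring
          _ = ∑ l, (∑ j', c.JacInv i j' (x t) * c.Jac j' l (x t))
                * (vel x t l * c.dτinv t) := by
              rw [Finset.sum_comm]
              exact Finset.sum_congr rfl fun l _ => (Finset.sum_mul _ _ _).symm
          _ = ∑ l, (if i = l then (1:ℝ) else 0) * (vel x t l * c.dτinv t) := by
              exact Finset.sum_congr rfl fun l _ => by rw [JacInv_mul_Jac c (x t) i l]
          _ = c.dτinv t * vel x t i := by simp [mul_comm]
      rw [e2]; ring
    -- substitute everything
    rw [haccEq t j, lawG (t, x t, vel x t) j, lawH (t, x t, vel x t) j]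
    dsimp only
    rw [hcol, lawh t]
    simp only [py_yc]
    have hsum : (∑ i, c.Jac j i (x t) * c.dτinv t * acc x t i) * c.dτinv t
        + (∑ k, 2 * G (t, x t, vel x t) k * c.dτinv t ^ 2 * c.Jac j k (x t))
        + (∑ k, 2 * H (t, x t, vel x t) k * c.dτinv t ^ 2 * c.Jac j k (x t))
        = c.dτinv t ^ 2 * ∑ k, c.Jac j k (x t)
            * (acc x t k + 2 * G (t, x t, vel x t) k + 2 * H (t, x t, vel x t) k) := by
      rw [Finset.sum_mul, Finset.mul_sum, ← Finset.sum_add_distrib, ← Finset.sum_add_distrib]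
      exact Finset.sum_congr rfl fun k _ => by ring
    have hrhs : ∑ k, c.Jac j k (x t) * ((1 / h t)
          * (acc x t k + 2 * G (t, x t, vel x t) k + 2 * H (t, x t, vel x t) k))
        = (1 / (h t * c.dτinv t ^ 2)) * (c.dτinv t ^ 2 * ∑ k, c.Jac j k (x t)
            * (acc x t k + 2 * G (t, x t, vel x t) k + 2 * H (t, x t, vel x t) k)) := by
      simp only [Finset.mul_sum]
      refine Finset.sum_congr rfl fun k _ => ?_
      field_simp
    rw [hrhs, ← hsum]
    field_simp
    ring
  have part1 : ∀ (t : ℝ) (i : Fin n),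
      (1 / h t) *
          (acc x t i + 2 * G (t, x t, vel x t) i + 2 * H (t, x t, vel x t) i) =
        ∑ j, c.JacInv i j (x t) *
          ((1 / h' (c.τ t)) *
            (acc (fun s => c.σ (x (c.τinv s))) (c.τ t) j +
              2 * G' (c.Φ (t, x t, vel x t)) j + 2 * H' (c.Φ (t, x t, vel x t)) j)) := by
    intro t i
    have step1 : ∑ j, c.JacInv i j (x t) *
          ((1 / h' (c.τ t)) *
            (acc (fun s => c.σ (x (c.τinv s))) (c.τ t) j +
              2 * G' (c.Φ (t, x t, vel x t)) j + 2 * H' (c.Φ (t, x t, vel x t)) j))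
        = ∑ j, c.JacInv i j (x t) * ∑ k, c.Jac j k (x t) * ((1 / h t) *
            (acc x t k + 2 * G (t, x t, vel x t) k + 2 * H (t, x t, vel x t) k)) :=
      Finset.sum_congr rfl fun j _ => by rw [key t j]
    rw [step1]
    have step2 : ∑ j, c.JacInv i j (x t) * ∑ k, c.Jac j k (x t) * ((1 / h t) *
          (acc x t k + 2 * G (t, x t, vel x t) k + 2 * H (t, x t, vel x t) k))
        = ∑ k, (∑ j, c.JacInv i j (x t) * c.Jac j k (x t)) * ((1 / h t) *
          (acc x t k + 2 * G (t, x t, vel x t) k + 2 * H (t, x t, vel x t) k)) := by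
      simp only [Finset.mul_sum]
      rw [Finset.sum_comm]
      refine Finset.sum_congr rfl fun k _ => ?_
      rw [Finset.sum_mul]
      exact Finset.sum_congr rfl fun j _ => by ring
    rw [step2]
    have step3 : ∑ k, (∑ j, c.JacInv i j (x t) * c.Jac j k (x t)) * ((1 / h t) *
          (acc x t k + 2 * G (t, x t, vel x t) k + 2 * H (t, x t, vel x t) k))
        = (1 / h t) *
            (acc x t i + 2 * G (t, x t, vel x t) i + 2 * H (t, x t, vel x t) i) := by
      have e : ∀ k, (∑ j, c.JacInv i j (x t) * c.Jac j k (x t))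
          = if i = k then (1:ℝ) else 0 := fun k => JacInv_mul_Jac c (x t) i k
      simp only [e]
      simp
    rw [step3]
  refine ⟨part1, fun t => ⟨?_, ?_⟩⟩
  · intro hz j
    rw [key t j]
    exact Finset.sum_eq_zero fun k _ => by rw [hz k]; ring
  · intro hz i
    rw [part1 t i]
    exact Finset.sum_eq_zero fun j _ => by rw [hz j]; ring


end Jet
end
end

section
/- (i) If G^{(i)}_{(1)1}(t,x,y) are the components of a spatial spray on J^1(R,M), then N^{(i)}_{(1)j} = ∂G^{(i)}_{(1)1}/∂y^j are the components of a spatial nonlinear connection. (ii) Conversely, if N^{(i)}_{(1)j} are the components of a spatial nonlinear connection, then 2G^{(i)}_{(1)1} = N^{(i)}_{(1)j} y^j defines a spatial spray. -/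
noncomputable section

open scoped BigOperators

namespace Jet

variable {n : ℕ}

/-! ### Auxiliary machinery -/

section Aux

variable {n : ℕ}

/-- basis vector -/
def bas (i : Fin n) : Vec n := fun j => if i = j then 1 else 0

lemma update_eq (x : Vec n) (i : Fin n) (s : ℝ) :
    Function.update x i s = x + (s - x i) • bas i := by
  funext j
  by_cases h : j = i
  · subst h; simp [bas]
  · simp [bas, Function.update_of_ne h, Ne.symm h]

lemma hasDerivAt_update (x : Vec n) (i : Fin n) (s0 : ℝ) :
    HasDerivAt (fun s => Function.update x i s) (bas i) s0 := by
  have h : HasDerivAt (fun s : ℝ => x + (s - x i) • bas i) ((1:ℝ) • bas i) s0 :=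
    (((hasDerivAt_id s0).sub_const (x i)).smul_const (bas i)).const_add x
  simp only [one_smul] at h
  simpa only [← update_eq] using h

/-- derivative of `g` along a coordinate line -/
lemma hasDerivAt_line {g : Vec n → ℝ} (hg : Differentiable ℝ g) (x : Vec n) (i : Fin n)
    (s0 : ℝ) :
    HasDerivAt (fun s => g (Function.update x i s))
      (fderiv ℝ g (Function.update x i s0) (bas i)) s0 :=
  ((hg _).hasFDerivAt).comp_hasDerivAt s0 (hasDerivAt_update x i s0)

lemma pX_eq {g : Vec n → ℝ} (hg : Differentiable ℝ g) (i : Fin n) (x : Vec n) :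
    pX g i x = fderiv ℝ g x (bas i) := by
  have h := hasDerivAt_line hg x i (x i)
  rw [Function.update_eq_self] at h
  exact h.deriv

lemma clm_expand (L : Vec n →L[ℝ] ℝ) (w : Vec n) :
    L w = ∑ j, w j * L (bas j) := by
  have hw : w = ∑ j, w j • bas j := pi_eq_sum_univ w
  calc L w = L (∑ j, w j • bas j) := by rw [← hw]
    _ = ∑ j, w j * L (bas j) := by rw [map_sum]; simp [smul_eq_mul]

lemma hasDerivAt_linupdate (a y : Vec n) (i : Fin n) (s0 : ℝ) :
    HasDerivAt (fun s => ∑ r, a r * Function.update y i s r) (a i) s0 := by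
  have h : HasDerivAt (fun s => ∑ r, a r * Function.update y i s r)
      (∑ r, if r = i then a r else 0) s0 := by
    apply HasDerivAt.fun_sum
    intro r _
    by_cases h : r = i
    · subst h
      simpa using (hasDerivAt_id s0).const_mul (a r)
    · simp only [if_neg h]
      simpa [Function.update_of_ne h] using hasDerivAt_const s0 (a r * y r)
  simpa using h

namespace CoordChange

variable (c : CoordChange n)

lemma diff_σk (k : Fin n) : Differentiable ℝ (fun z => c.σ z k) :=
  (contDiff_pi.1 c.smooth_σ k).differentiable (by simp)

lemma diff_σinvk (k : Fin n) : Differentiable ℝ (fun z => c.σinv z k) :=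
  (contDiff_pi.1 c.smooth_σinv k).differentiable (by simp)

lemma diff_fderiv_σk (k : Fin n) :
    Differentiable ℝ (fderiv ℝ (fun z => c.σ z k)) :=
  ((contDiff_pi.1 c.smooth_σ k).fderiv_right (m := (⊤ : ℕ∞)) (by simp)).differentiable (by simp)

lemma jac_eq (k j : Fin n) (x : Vec n) :
    c.Jac k j x = fderiv ℝ (fun z => c.σ z k) x (bas j) :=
  pX_eq (c.diff_σk k) j x

lemma jacInv_eq (i j : Fin n) (x : Vec n) :
    c.JacInv i j x = fderiv ℝ (fun z => c.σinv z i) (c.σ x) (bas j) :=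
  pX_eq (c.diff_σinvk i) j (c.σ x)

lemma diff_jac (k j : Fin n) : Differentiable ℝ (fun z => c.Jac k j z) := by
  have : (fun z => c.Jac k j z) = fun z => fderiv ℝ (fun w => c.σ w k) z (bas j) :=
    funext fun z => c.jac_eq k j z
  rw [this]
  exact (c.diff_fderiv_σk k).clm_apply (differentiable_const _)

/-- symmetry of second derivatives of `σ`. -/
lemma jac_symm (k r m : Fin n) (x : Vec n) :
    fderiv ℝ (fun z => c.Jac k r z) x (bas m) = fderiv ℝ (fun z => c.Jac k m z) x (bas r) := by
  have hfun : ∀ a : Fin n, (fun z => c.Jac k a z)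
      = fun z => fderiv ℝ (fun w => c.σ w k) z (bas a) :=
    fun a => funext fun z => c.jac_eq k a z
  have hsymm := second_derivative_symmetric
    (f := fun z => c.σ z k) (f' := fderiv ℝ (fun z => c.σ z k))
    (f'' := fderiv ℝ (fderiv ℝ (fun z => c.σ z k)) x)
    (fun y => (c.diff_σk k y).hasFDerivAt)
    ((c.diff_fderiv_σk k x).hasFDerivAt) (bas m) (bas r)
  have happ : ∀ a b : Fin n,
      fderiv ℝ (fun z => fderiv ℝ (fun w => c.σ w k) z (bas a)) x (bas b)
        = fderiv ℝ (fderiv ℝ (fun z => c.σ z k)) x (bas b) (bas a) := by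
    intro a b
    rw [fderiv_clm_apply (c.diff_fderiv_σk k x) (differentiableAt_const _)]
    simp
  rw [hfun r, hfun m, happ r m, happ m r, hsymm]

lemma jacInv_mul_jac (x : Vec n) (i m : Fin n) :
    ∑ j, c.JacInv i j x * c.Jac j m x = if i = m then 1 else 0 := by
  have hσ : Differentiable ℝ c.σ := c.smooth_σ.differentiable (by simp)
  have hcomp : (fun z => c.σinv (c.σ z) i) = fun z : Vec n => z i :=
    funext fun z => congrFun (c.left_σ z) i
  have h1 : fderiv ℝ (fun z => c.σinv (c.σ z) i) x (bas m) = bas m i := by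
    rw [hcomp]
    have : fderiv ℝ (fun z : Vec n => z i) x
        = (ContinuousLinearMap.proj i : Vec n →L[ℝ] ℝ) :=
      (ContinuousLinearMap.proj i : Vec n →L[ℝ] ℝ).fderiv
    rw [this]; rfl
  have h2 : fderiv ℝ (fun z => c.σinv (c.σ z) i) x (bas m)
      = fderiv ℝ (fun z => c.σinv z i) (c.σ x) (fderiv ℝ c.σ x (bas m)) := by
    have := fderiv_comp (𝕜 := ℝ) (g := fun z => c.σinv z i) (f := c.σ) x
      ((c.diff_σinvk i) (c.σ x)) (hσ x)
    calc fderiv ℝ (fun z => c.σinv (c.σ z) i) x (bas m)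
        = fderiv ℝ ((fun z => c.σinv z i) ∘ c.σ) x (bas m) := rfl
      _ = fderiv ℝ (fun z => c.σinv z i) (c.σ x) (fderiv ℝ c.σ x (bas m)) := by
          rw [this]; rfl
  have h3 : fderiv ℝ c.σ x (bas m) = fun j => c.Jac j m x := by
    funext j
    have : fderiv ℝ c.σ x = ContinuousLinearMap.pi (fun j => fderiv ℝ (fun z => c.σ z j) x) :=
      fderiv_pi (fun j => (c.diff_σk j) x)
    rw [this, c.jac_eq j m x]; rfl
  have h4 : fderiv ℝ (fun z => c.σinv z i) (c.σ x) (fun j => c.Jac j m x)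
      = ∑ j, c.Jac j m x * c.JacInv i j x := by
    rw [clm_expand]
    exact Finset.sum_congr rfl fun j _ => by rw [c.jacInv_eq i j x]
  have hbas : bas m i = if i = m then (1:ℝ) else 0 := by
    simp [bas, eq_comm]
  calc ∑ j, c.JacInv i j x * c.Jac j m x
      = ∑ j, c.Jac j m x * c.JacInv i j x := by
        exact Finset.sum_congr rfl fun j _ => mul_comm _ _
    _ = fderiv ℝ (fun z => c.σinv z i) (c.σ x) (fun j => c.Jac j m x) := h4.symm
    _ = if i = m then 1 else 0 := by rw [← h3, ← h2, h1, hbas]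

lemma dτinv_mul_dτ (t : ℝ) : c.dτinv t * deriv c.τ t = 1 := by
  have hτ : HasDerivAt c.τ (deriv c.τ t) t :=
    ((c.smooth_τ.differentiable (by simp)) t).hasDerivAt
  have hτinv : HasDerivAt c.τinv (deriv c.τinv (c.τ t)) (c.τ t) :=
    ((c.smooth_τinv.differentiable (by simp)) (c.τ t)).hasDerivAt
  have hcomp : HasDerivAt (fun s => c.τinv (c.τ s)) (deriv c.τinv (c.τ t) * deriv c.τ t) t :=
    hτinv.comp t hτ
  have hid : (fun s => c.τinv (c.τ s)) = fun s => s := funext fun s => c.left_τ s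
  rw [hid] at hcomp
  have := hcomp.unique (hasDerivAt_id t)
  simpa [CoordChange.dτinv] using this

lemma dτinv_ne (t : ℝ) : c.dτinv t ≠ 0 :=
  left_ne_zero_of_mul_eq_one (c.dτinv_mul_dτ t)

lemma py_yc (p : J1 n) (k l : Fin n) :
    py (fun q => c.yc q k) l p = c.Jac k l p.2.1 * c.dτinv p.1 := by
  have h : HasDerivAt (fun s => c.yc (p.1, p.2.1, Function.update p.2.2 l s) k)
      (c.Jac k l p.2.1 * c.dτinv p.1) (p.2.2 l) := by
    have := (hasDerivAt_linupdate (fun r => c.Jac k r p.2.1) p.2.2 l (p.2.2 l)).mul_const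
      (c.dτinv p.1)
    simpa [CoordChange.yc] using this
  exact h.deriv

lemma px_yc (p : J1 n) (k m : Fin n) :
    px (fun q => c.yc q k) m p
      = (∑ r, fderiv ℝ (fun z => c.Jac k r z) p.2.1 (bas m) * p.2.2 r) * c.dτinv p.1 := by
  have h : HasDerivAt (fun s => c.yc (p.1, Function.update p.2.1 m s, p.2.2) k)
      ((∑ r, fderiv ℝ (fun z => c.Jac k r z) p.2.1 (bas m) * p.2.2 r) * c.dτinv p.1)
      (p.2.1 m) := by
    have hsum : HasDerivAt
        (fun s => ∑ r, c.Jac k r (Function.update p.2.1 m s) * p.2.2 r)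
        (∑ r, fderiv ℝ (fun z => c.Jac k r z) p.2.1 (bas m) * p.2.2 r) (p.2.1 m) := by
      apply HasDerivAt.fun_sum
      intro r _
      have := (hasDerivAt_line (c.diff_jac k r) p.2.1 m (p.2.1 m)).mul_const (p.2.2 r)
      simpa using this
    simpa [CoordChange.yc] using hsum.mul_const (c.dτinv p.1)
  exact h.deriv

lemma sum_jacInv_yc (p : J1 n) (i : Fin n) :
    ∑ k, c.JacInv i k p.2.1 * c.yc p k = c.dτinv p.1 * p.2.2 i := by
  simp only [CoordChange.yc]
  calc ∑ k, c.JacInv i k p.2.1 * ((∑ r, c.Jac k r p.2.1 * p.2.2 r) * c.dτinv p.1)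
      = ∑ k, ∑ r, c.JacInv i k p.2.1 * c.Jac k r p.2.1 * p.2.2 r * c.dτinv p.1 := by
        refine Finset.sum_congr rfl fun k _ => ?_
        rw [Finset.sum_mul, Finset.mul_sum]
        exact Finset.sum_congr rfl fun r _ => by ring
    _ = ∑ r, (∑ k, c.JacInv i k p.2.1 * c.Jac k r p.2.1) * p.2.2 r * c.dτinv p.1 := by
        rw [Finset.sum_comm]
        exact Finset.sum_congr rfl fun r _ => by rw [Finset.sum_mul, Finset.sum_mul]
    _ = ∑ r, (if i = r then (1:ℝ) else 0) * p.2.2 r * c.dτinv p.1 := by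
        refine Finset.sum_congr rfl fun r _ => by rw [c.jacInv_mul_jac]
    _ = c.dτinv p.1 * p.2.2 i := by
        simp [ite_mul, mul_comm]

/-- chain rule along a curve in the fibre variables -/
lemma hasDerivAt_comp_y {f : J1 n → ℝ} (hf : Differentiable ℝ f) (a : ℝ) (b : Vec n)
    {Yc : ℝ → Vec n} {v : Vec n} {s0 : ℝ} (hY : HasDerivAt Yc v s0) :
    HasDerivAt (fun s => f (a, b, Yc s)) (∑ m, v m * py f m (a, b, Yc s0)) s0 := by
  have hfy : Differentiable ℝ (fun w : Vec n => f (a, b, w)) :=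
    hf.comp ((differentiable_const _).prodMk ((differentiable_const _).prodMk differentiable_id))
  have h := ((hfy (Yc s0)).hasFDerivAt).comp_hasDerivAt s0 hY
  have hval : fderiv ℝ (fun w : Vec n => f (a, b, w)) (Yc s0) v
      = ∑ m, v m * py f m (a, b, Yc s0) := by
    rw [clm_expand]
    refine Finset.sum_congr rfl fun m _ => ?_
    congr 1
    exact (pX_eq hfy m (Yc s0)).symm
  rw [hval] at h
  exact h

/-- derivative of `f` in a single fibre coordinate -/
lemma hasDerivAt_py {f : J1 n → ℝ} (hf : Differentiable ℝ f) (p : J1 n) (i : Fin n) :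
    HasDerivAt (fun s => f (p.1, p.2.1, Function.update p.2.2 i s)) (py f i p) (p.2.2 i) := by
  have h := hasDerivAt_comp_y hf p.1 p.2.1 (hasDerivAt_update p.2.2 i (p.2.2 i))
  rw [Function.update_eq_self] at h
  have : (∑ m, bas i m * py f m (p.1, p.2.1, p.2.2)) = py f i p := by
    simp [bas, Finset.sum_ite_eq, ite_mul]
  rwa [this] at h

end CoordChange

end Aux

/-- (i) If `G⁽ⁱ⁾₍₁₎₁` are the components of a spatial spray on `J¹(ℝ,M)`, then
`N⁽ⁱ⁾₍₁₎ⱼ = ∂G⁽ⁱ⁾₍₁₎₁/∂yʲ` are the components of a spatial nonlinear connection.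
(ii) Conversely, if `N⁽ⁱ⁾₍₁₎ⱼ` are the components of a spatial nonlinear connection,
then `2G⁽ⁱ⁾₍₁₎₁ = N⁽ⁱ⁾₍₁₎ⱼ yʲ` defines a spatial spray. -/
theorem spatial_spray_vs_spatial_nonlinear_connection
    {n : ℕ} (c : CoordChange n) (G G' : J1 n → Fin n → ℝ)
    (N N' : J1 n → Fin n → Fin n → ℝ)
    (hG : ContDiff ℝ (⊤ : ℕ∞) G) (hG' : ContDiff ℝ (⊤ : ℕ∞) G') :
    (SpatialSprayLaw c G G' →
      SpatialNLCLaw c (fun p i j => py (fun q => G q i) j p)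
        (fun p i j => py (fun q => G' q i) j p)) ∧
    (SpatialNLCLaw c N N' →
      SpatialSprayLaw c (fun p i => (∑ j, N p i j * p.2.2 j) / 2)
        (fun p i => (∑ j, N' p i j * p.2.2 j) / 2)) := by
  constructor
  · intro hS p j i
    beta_reduce
    have hf' : Differentiable ℝ (fun q => G' q j) := (contDiff_pi.1 hG' j).differentiable (by simp)
    set D : Fin n → Fin n → ℝ :=
      fun r m => fderiv ℝ (fun z => c.Jac j r z) p.2.1 (bas m) with hD
    -- derivative of the left-hand side of the spray law
    have hY : HasDerivAt (fun s => c.yc (p.1, p.2.1, Function.update p.2.2 i s))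
        (fun m => c.Jac m i p.2.1 * c.dτinv p.1) (p.2.2 i) := by
      rw [hasDerivAt_pi]
      intro m
      have := (hasDerivAt_linupdate (fun r => c.Jac m r p.2.1) p.2.2 i (p.2.2 i)).mul_const
        (c.dτinv p.1)
      simpa [CoordChange.yc] using this
    have hd1 : HasDerivAt (fun s => 2 * G' (c.Φ (p.1, p.2.1, Function.update p.2.2 i s)) j)
        (2 * ∑ m, (c.Jac m i p.2.1 * c.dτinv p.1) * py (fun q => G' q j) m (c.Φ p))
        (p.2.2 i) := by
      have h := (CoordChange.hasDerivAt_comp_y hf' (c.τ p.1) (c.σ p.2.1) hY).const_mul 2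
      simpa [CoordChange.Φ, Function.update_eq_self] using h
    -- derivative of the right-hand side of the spray law
    have hd2a : HasDerivAt (fun s => ∑ kk, 2 * G (p.1, p.2.1, Function.update p.2.2 i s) kk
          * c.dτinv p.1 ^ 2 * c.Jac j kk p.2.1)
        (∑ kk, 2 * py (fun q => G q kk) i p * c.dτinv p.1 ^ 2 * c.Jac j kk p.2.1)
        (p.2.2 i) := by
      apply HasDerivAt.fun_sum
      intro kk _
      have hfk : Differentiable ℝ (fun q => G q kk) := (contDiff_pi.1 hG kk).differentiable (by simp)
      exact (((CoordChange.hasDerivAt_py hfk p i).const_mul 2).mul_const _).mul_const _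
    have hFeq2 : (fun s => ∑ kk, ∑ m, c.JacInv m kk p.2.1
          * px (fun q => c.yc q j) m (p.1, p.2.1, Function.update p.2.2 i s)
          * c.yc (p.1, p.2.1, Function.update p.2.2 i s) kk)
        = fun s => ∑ kk, ∑ m, (c.JacInv m kk p.2.1
          * ((∑ r, D r m * Function.update p.2.2 i s r) * c.dτinv p.1))
          * ((∑ r, c.Jac kk r p.2.1 * Function.update p.2.2 i s r) * c.dτinv p.1) := by
      funext s
      refine Finset.sum_congr rfl fun kk _ => Finset.sum_congr rfl fun m _ => ?_
      rw [c.px_yc]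
      simp [CoordChange.yc, hD, mul_assoc]
    have hd2b : HasDerivAt (fun s => ∑ kk, ∑ m, c.JacInv m kk p.2.1
          * px (fun q => c.yc q j) m (p.1, p.2.1, Function.update p.2.2 i s)
          * c.yc (p.1, p.2.1, Function.update p.2.2 i s) kk)
        (∑ kk, ∑ m, ((c.JacInv m kk p.2.1 * (D i m * c.dτinv p.1))
            * ((∑ r, c.Jac kk r p.2.1 * p.2.2 r) * c.dτinv p.1)
          + (c.JacInv m kk p.2.1 * ((∑ r, D r m * p.2.2 r) * c.dτinv p.1))
            * (c.Jac kk i p.2.1 * c.dτinv p.1))) (p.2.2 i) := by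
      rw [hFeq2]
      apply HasDerivAt.fun_sum; intro kk _
      apply HasDerivAt.fun_sum; intro m _
      have h1 := ((hasDerivAt_linupdate (fun r => D r m) p.2.2 i (p.2.2 i)).mul_const
        (c.dτinv p.1)).const_mul (c.JacInv m kk p.2.1)
      have h2 := (hasDerivAt_linupdate (fun r => c.Jac kk r p.2.1) p.2.2 i
        (p.2.2 i)).mul_const (c.dτinv p.1)
      have := h1.fun_mul h2
      simpa [Function.update_eq_self] using this
    -- the spray law, as an identity of functions of `s`
    have hfun : (fun s => 2 * G' (c.Φ (p.1, p.2.1, Function.update p.2.2 i s)) j)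
        = (fun s => (∑ kk, 2 * G (p.1, p.2.1, Function.update p.2.2 i s) kk
              * c.dτinv p.1 ^ 2 * c.Jac j kk p.2.1)
            - ∑ kk, ∑ m, c.JacInv m kk p.2.1
              * px (fun q => c.yc q j) m (p.1, p.2.1, Function.update p.2.2 i s)
              * c.yc (p.1, p.2.1, Function.update p.2.2 i s) kk) :=
      funext fun s => hS (p.1, p.2.1, Function.update p.2.2 i s) j
    have hd2 := hd2a.fun_sub hd2b
    rw [← hfun] at hd2
    have hEq := hd1.unique hd2
    -- evaluate the two parts of the second sum
    have hT1 : ∑ kk, ∑ m, (c.JacInv m kk p.2.1 * (D i m * c.dτinv p.1))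
          * ((∑ r, c.Jac kk r p.2.1 * p.2.2 r) * c.dτinv p.1)
        = c.dτinv p.1 * px (fun q => c.yc q j) i p := by
      calc ∑ kk, ∑ m, (c.JacInv m kk p.2.1 * (D i m * c.dτinv p.1))
            * ((∑ r, c.Jac kk r p.2.1 * p.2.2 r) * c.dτinv p.1)
          = ∑ m, ∑ kk, (D i m * c.dτinv p.1) * (c.JacInv m kk p.2.1 * c.yc p kk) := by
            rw [Finset.sum_comm]
            exact Finset.sum_congr rfl fun m _ => Finset.sum_congr rfl fun kk _ => by
              show _ = _ * (_ * c.yc p kk)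
              rw [CoordChange.yc]
              ring
        _ = ∑ m, (D i m * c.dτinv p.1) * (c.dτinv p.1 * p.2.2 m) := by
            refine Finset.sum_congr rfl fun m _ => ?_
            rw [← Finset.mul_sum, c.sum_jacInv_yc]
        _ = c.dτinv p.1 * ((∑ m, fderiv ℝ (fun z => c.Jac j m z) p.2.1 (bas i) * p.2.2 m)
              * c.dτinv p.1) := by
            conv_rhs => rw [Finset.sum_mul]
            rw [Finset.mul_sum]
            refine Finset.sum_congr rfl fun m _ => ?_
            have h1 : D i m = fderiv ℝ (fun z => c.Jac j m z) p.2.1 (bas i) := by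
              rw [hD]
              exact c.jac_symm j i m p.2.1
            rw [h1]; ring
        _ = c.dτinv p.1 * px (fun q => c.yc q j) i p := by rw [c.px_yc]
    have hT2 : ∑ kk, ∑ m, (c.JacInv m kk p.2.1 * ((∑ r, D r m * p.2.2 r) * c.dτinv p.1))
          * (c.Jac kk i p.2.1 * c.dτinv p.1)
        = c.dτinv p.1 * px (fun q => c.yc q j) i p := by
      calc ∑ kk, ∑ m, (c.JacInv m kk p.2.1 * ((∑ r, D r m * p.2.2 r) * c.dτinv p.1))
            * (c.Jac kk i p.2.1 * c.dτinv p.1)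
          = ∑ m, ((∑ r, D r m * p.2.2 r) * c.dτinv p.1) * c.dτinv p.1
              * ∑ kk, c.JacInv m kk p.2.1 * c.Jac kk i p.2.1 := by
            rw [Finset.sum_comm]
            refine Finset.sum_congr rfl fun m _ => ?_
            rw [Finset.mul_sum]
            exact Finset.sum_congr rfl fun kk _ => by ring
        _ = ∑ m, ((∑ r, D r m * p.2.2 r) * c.dτinv p.1) * c.dτinv p.1
              * (if m = i then 1 else 0) := by
            exact Finset.sum_congr rfl fun m _ => by rw [c.jacInv_mul_jac]
        _ = ((∑ r, D r i * p.2.2 r) * c.dτinv p.1) * c.dτinv p.1 := by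
            simp
        _ = c.dτinv p.1 * px (fun q => c.yc q j) i p := by
            rw [c.px_yc]
            simp only [hD]
            ring
    simp only [Finset.sum_add_distrib, hT1, hT2] at hEq
    -- conclude
    apply mul_left_cancel₀ (a := 2 * c.dτinv p.1) (mul_ne_zero two_ne_zero (c.dτinv_ne p.1))
    calc 2 * c.dτinv p.1 * ∑ kk, py (fun q => G' q j) kk (c.Φ p) * c.Jac kk i p.2.1
        = 2 * ∑ m, (c.Jac m i p.2.1 * c.dτinv p.1) * py (fun q => G' q j) m (c.Φ p) := by
          rw [Finset.mul_sum, Finset.mul_sum]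
          exact Finset.sum_congr rfl fun m _ => by ring
      _ = (∑ kk, 2 * py (fun q => G q kk) i p * c.dτinv p.1 ^ 2 * c.Jac j kk p.2.1)
          - (c.dτinv p.1 * px (fun q => c.yc q j) i p
            + c.dτinv p.1 * px (fun q => c.yc q j) i p) := hEq
      _ = 2 * c.dτinv p.1 * ((∑ kk, py (fun q => G q kk) i p * c.dτinv p.1 * c.Jac j kk p.2.1)
          - px (fun q => c.yc q j) i p) := by
          rw [mul_sub, Finset.mul_sum]
          congr 1
          · exact Finset.sum_congr rfl fun kk _ => by ring
          · ring
  · -- part (ii)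
    intro hN p k
    beta_reduce
    have hφ : (c.Φ p).2.2 = c.yc p := rfl
    rw [hφ]
    have hyc : ∀ kk, c.yc p kk = (∑ r, c.Jac kk r p.2.1 * p.2.2 r) * c.dτinv p.1 :=
      fun kk => rfl
    have hL : 2 * ((∑ jj, N' (c.Φ p) k jj * c.yc p jj) / 2)
        = (∑ l, ∑ m, N p l m * p.2.2 m * c.dτinv p.1 ^ 2 * c.Jac k l p.2.1)
          - ∑ m, px (fun q => c.yc q k) m p * (c.dτinv p.1 * p.2.2 m) := by
      rw [mul_div_cancel₀ _ two_ne_zero]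
      calc ∑ jj, N' (c.Φ p) k jj * c.yc p jj
          = ∑ jj, ∑ m, N' (c.Φ p) k jj * c.Jac jj m p.2.1 * (p.2.2 m * c.dτinv p.1) := by
            refine Finset.sum_congr rfl fun jj _ => ?_
            rw [hyc, Finset.sum_mul, Finset.mul_sum]
            exact Finset.sum_congr rfl fun m _ => by ring
        _ = ∑ m, (∑ jj, N' (c.Φ p) k jj * c.Jac jj m p.2.1) * (p.2.2 m * c.dτinv p.1) := by
            rw [Finset.sum_comm]
            exact Finset.sum_congr rfl fun m _ => by rw [Finset.sum_mul]
        _ = ∑ m, ((∑ l, N p l m * c.dτinv p.1 * c.Jac k l p.2.1)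
              - px (fun q => c.yc q k) m p) * (p.2.2 m * c.dτinv p.1) := by
            exact Finset.sum_congr rfl fun m _ => by rw [hN p k m]
        _ = (∑ m, ∑ l, N p l m * p.2.2 m * c.dτinv p.1 ^ 2 * c.Jac k l p.2.1)
              - ∑ m, px (fun q => c.yc q k) m p * (c.dτinv p.1 * p.2.2 m) := by
            rw [← Finset.sum_sub_distrib]
            refine Finset.sum_congr rfl fun m _ => ?_
            rw [sub_mul, Finset.sum_mul]
            congr 1
            · exact Finset.sum_congr rfl fun l _ => by ring
            · ring
        _ = (∑ l, ∑ m, N p l m * p.2.2 m * c.dτinv p.1 ^ 2 * c.Jac k l p.2.1)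
              - ∑ m, px (fun q => c.yc q k) m p * (c.dτinv p.1 * p.2.2 m) := by
            rw [Finset.sum_comm]
    rw [hL]
    congr 1
    · -- first sums agree
      refine Finset.sum_congr rfl fun l _ => ?_
      rw [mul_div_cancel₀ _ (two_ne_zero (α := ℝ)), Finset.sum_mul, Finset.sum_mul]
    · -- second sums agree
      calc (∑ m, px (fun q => c.yc q k) m p * (c.dτinv p.1 * p.2.2 m))
          = ∑ m, px (fun q => c.yc q k) m p * ∑ jj, c.JacInv m jj p.2.1 * c.yc p jj := by
            exact Finset.sum_congr rfl fun m _ => by rw [c.sum_jacInv_yc]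
        _ = ∑ jj, ∑ m, c.JacInv m jj p.2.1 * px (fun q => c.yc q k) m p * c.yc p jj := by
            rw [Finset.sum_comm]
            refine Finset.sum_congr rfl fun m _ => ?_
            rw [Finset.mul_sum]
            exact Finset.sum_congr rfl fun jj _ => by ring


end Jet
end
end

section
/- Let h_{11}(t) be a semi-Riemannian metric on R with Christoffel symbols H^1_{11} (first kind: H_{111} = H^1_{11}h_{11}), and let ∇ be an h-normal Γ-linear connection on J^1(R,M), i.e. a Γ-linear connection with Ḡ^1_{11} = H^1_{11}, L̄^1_{1j} = 0, C̄^{1(1)}_{1(j)} = 0 and ∇J = 0, where J = h_{11}δ^i_j ∂/∂y^i ⊗ dt ⊗ dx^j is the normalization d-tensor of h. Then the coefficients of ∇ satisfy G^{(k)(1)}_{(1)(i)1} = G^k_{i1} − δ^k_i H^1_{11}, L^{(k)(1)}_{(1)(i)j} = L^k_{ij}, and C^{(k)(1)(1)}_{(1)(i)(j)} = C^{k(1)}_{i(j)}; in particular ∇ is determined by the four coefficients (H^1_{11}, G^k_{i1}, L^k_{ij}, C^{k(1)}_{i(j)}). -/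
noncomputable section

open scoped BigOperators

namespace Jet

variable {n : ℕ}

/-- The adapted temporal derivative `δf/δt = ∂f/∂t − M⁽ʲ⁾₍₁₎₁ ∂f/∂yʲ`. -/
def deltaT {n : ℕ} (M : J1 n → Fin n → ℝ) (f : J1 n → ℝ) (p : J1 n) : ℝ :=
  pt f p - ∑ j, M p j * py f j p

/-- The adapted spatial derivative `δf/δxᵏ = ∂f/∂xᵏ − N⁽ʲ⁾₍₁₎ₖ ∂f/∂yʲ`. -/
def deltaX {n : ℕ} (N : J1 n → Fin n → Fin n → ℝ) (f : J1 n → ℝ) (k : Fin n)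
    (p : J1 n) : ℝ :=
  px f k p - ∑ j, N p j k * py f j p

/-- The normalization d-tensor `J⁽ⁱ⁾₍₁₎₁ⱼ = h₁₁ δⁱⱼ` attached to the temporal metric `h`. -/
def normTensor {n : ℕ} (h : ℝ → ℝ) (p : J1 n) (i j : Fin n) : ℝ :=
  h p.1 * (if i = j then 1 else 0)

/-- Let `∇` be an `h`-normal `Γ`-linear connection on `J¹(ℝ,M)`, given by
nine coefficient families with `Ḡ¹₁₁ = H¹₁₁`, `L̄¹₁ⱼ = 0`, `C̄¹⁽¹⁾₁₍ⱼ₎ = 0` and `∇J = 0`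
(i.e. the three covariant derivatives of the normalization d-tensor `J⁽ⁱ⁾₍₁₎₁ⱼ = h₁₁δⁱⱼ`
vanish). Then its coefficients satisfy `G⁽ᵏ⁾⁽¹⁾₍₁₎₍ᵢ₎₁ = Gᵏᵢ₁ − δᵏᵢ H¹₁₁`,
`L⁽ᵏ⁾⁽¹⁾₍₁₎₍ᵢ₎ⱼ = Lᵏᵢⱼ` and `C⁽ᵏ⁾⁽¹⁾⁽¹⁾₍₁₎₍ᵢ₎₍ⱼ₎ = Cᵏ⁽¹⁾ᵢ₍ⱼ₎`; in particular `∇` is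
determined by the four coefficients `(H¹₁₁, Gᵏᵢ₁, Lᵏᵢⱼ, Cᵏ⁽¹⁾ᵢ₍ⱼ₎)`. -/
theorem h_normal_connection_four_coefficients
    {n : ℕ} (h : ℝ → ℝ) (hsm : ContDiff ℝ (⊤ : ℕ∞) h) (hne : ∀ t, h t ≠ 0)
    (M : J1 n → Fin n → ℝ) (N : J1 n → Fin n → Fin n → ℝ)
    -- the nine coefficients of ∇, with the `h`-normality conditions
    (Gbar : J1 n → ℝ) (Lbar Cbar : J1 n → Fin n → ℝ)
    (Gc Gv : J1 n → Fin n → Fin n → ℝ)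
    (Lc Lv Cc Cv : J1 n → Fin n → Fin n → Fin n → ℝ)
    (hGbar : ∀ p : J1 n, Gbar p = christoffelT h p.1)
    (hLbar : ∀ (p : J1 n) (j : Fin n), Lbar p j = 0)
    (hCbar : ∀ (p : J1 n) (j : Fin n), Cbar p j = 0)
    -- ∇J = 0 : `J⁽ⁱ⁾₍₁₎₁ⱼ/₁ = 0`
    (hJ1 : ∀ (p : J1 n) (i j : Fin n),
      deltaT M (fun q => normTensor h q i j) p +
          (∑ m, normTensor h p m j * Gv p i m) -
          normTensor h p i j * Gbar p - (∑ m, normTensor h p i m * Gc p m j) = 0)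
    -- `J⁽ⁱ⁾₍₁₎₁ⱼ|ₖ = 0`
    (hJ2 : ∀ (p : J1 n) (i j k : Fin n),
      deltaX N (fun q => normTensor h q i j) k p +
          (∑ m, normTensor h p m j * Lv p i m k) -
          normTensor h p i j * Lbar p k - (∑ m, normTensor h p i m * Lc p m j k) = 0)
    -- `J⁽ⁱ⁾₍₁₎₁ⱼ|⁽¹⁾₍ₖ₎ = 0`
    (hJ3 : ∀ (p : J1 n) (i j k : Fin n),
      py (fun q => normTensor h q i j) k p +
          (∑ m, normTensor h p m j * Cv p i m k) -
          normTensor h p i j * Cbar p k - (∑ m, normTensor h p i m * Cc p m j k) = 0) :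
    (∀ (p : J1 n) (k i : Fin n),
      Gv p k i = Gc p k i - (if k = i then christoffelT h p.1 else 0)) ∧
    (∀ (p : J1 n) (k i j : Fin n), Lv p k i j = Lc p k i j) ∧
    (∀ (p : J1 n) (k i j : Fin n), Cv p k i j = Cc p k i j) := by
  have hdiff : Differentiable ℝ h := hsm.differentiable (by simp)
  have hpt : ∀ (p : J1 n) (i j : Fin n),
      pt (fun q => normTensor h q i j) p = (if i = j then (1:ℝ) else 0) * deriv h p.1 := by
    intro p i j
    unfold pt normTensor
    simp only
    rw [deriv_mul_const (hdiff p.1)]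
    ring
  have hpy : ∀ (p : J1 n) (i j k : Fin n),
      py (fun q => normTensor h q i j) k p = 0 := by
    intro p i j k
    unfold py normTensor
    simp
  have hpx : ∀ (p : J1 n) (i j k : Fin n),
      px (fun q => normTensor h q i j) k p = 0 := by
    intro p i j k
    unfold px normTensor
    simp
  refine ⟨?_, ?_, ?_⟩
  · intro p k i
    have h1 := hJ1 p k i
    rw [deltaT, hpt p k i] at h1
    simp only [hpy, mul_zero, Finset.sum_const_zero, sub_zero] at h1
    simp only [hGbar, normTensor, ite_mul, one_mul, zero_mul, mul_ite, mul_one, mul_zero,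
      Finset.sum_ite_eq, Finset.sum_ite_eq', Finset.mem_univ, if_true] at h1
    have hne' := hne p.1
    by_cases hki : k = i
    · subst hki
      simp only [if_true, christoffelT] at h1 ⊢
      field_simp at h1 ⊢
      have key : h p.1 * (Gv p k k * (2 * h p.1)) =
          h p.1 * (Gc p k k * (2 * h p.1) - deriv h p.1) := by linear_combination (h p.1) * h1
      have h2 := mul_left_cancel₀ hne' key
      linarith
    · simp only [if_neg hki] at h1 ⊢
      have : h p.1 * Gv p k i = h p.1 * Gc p k i := by linarith
      have := mul_left_cancel₀ hne' this
      linarith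
  · intro p k i j
    have h2 := hJ2 p k i j
    rw [deltaX, hpx p k i j] at h2
    simp only [hpy, mul_zero, Finset.sum_const_zero, sub_zero, zero_sub, zero_add,
      neg_add_rev] at h2
    simp only [hLbar, normTensor, ite_mul, one_mul, zero_mul, mul_ite, mul_one, mul_zero,
      Finset.sum_ite_eq, Finset.sum_ite_eq', Finset.mem_univ, if_true] at h2
    have : h p.1 * Lv p k i j = h p.1 * Lc p k i j := by linarith
    exact mul_left_cancel₀ (hne p.1) this
  · intro p k i j
    have h3 := hJ3 p k i j
    rw [hpy p k i j] at h3
    simp only [hCbar, normTensor, ite_mul, one_mul, zero_mul, mul_ite, mul_one, mul_zero,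
      Finset.sum_ite_eq, Finset.sum_ite_eq', Finset.mem_univ, if_true, zero_add] at h3
    have : h p.1 * Cv p k i j = h p.1 * Cc p k i j := by linarith
    exact mul_left_cancel₀ (hne p.1) this

end Jet
end
end
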